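/- Let n ≥ 1 and p > n/(n+2) with p ≠ 1. For every probability density f on ℝ^n with finite positive second moment E(f) and 0 < ∫ f^p dx < ∞, one has R_p(f) − (n/2) log E(f) ≤ R_p(B_{p,σ}) − (n/2) log E(B_{p,σ}), where B_{p,σ} is the Barenblatt density of order p with second moment σ > 0 (the right-hand side being independent of σ by dilation invariance). Equivalently, N_p(f)/E(f)^{1+n(p−1)/2} ≤ N_p(B_{p,σ})/E(B_{p,σ})^{1+n(p−1)/2}: under a variance constraint, the Rényi entropy (power) of order p is maximized by a Barenblatt density. -/

import Mathlib

open MeasureTheory Real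

/-- The Rényi entropy of order `p`: `R_p(f) = (1/(1-p)) log ∫ f^p`. -/
noncomputable def renyiEntropy (n : ℕ) (p : ℝ) (f : EuclideanSpace ℝ (Fin n) → ℝ) : ℝ :=
  (1 / (1 - p)) * Real.log (∫ x, f x ^ p)

/-- The `p`-th Rényi entropy power: `N_p(f) = exp((2/n + p - 1) R_p(f))`. -/
noncomputable def renyiPower (n : ℕ) (p : ℝ) (f : EuclideanSpace ℝ (Fin n) → ℝ) : ℝ :=
  Real.exp ((2 / n + p - 1) * renyiEntropy n p f)

/-- The second moment of a density on `ℝ^n`: `E(f) = ∫ |x|² f(x) dx`. -/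
noncomputable def secondMoment (n : ℕ) (f : EuclideanSpace ℝ (Fin n) → ℝ) : ℝ :=
  ∫ x, ‖x‖ ^ 2 * f x

/-- The Barenblatt profile `M̃_p(x) = (C - λ|x|²)₊^{1/(p-1)}`, with
`λ = (p-1)/(2μp)`, `μ = 2 + n(p-1)`. -/
noncomputable def barenblattProfile (n : ℕ) (p C : ℝ)
    (x : EuclideanSpace ℝ (Fin n)) : ℝ :=
  max (C - (p - 1) / (2 * (2 + (n : ℝ) * (p - 1)) * p) * ‖x‖ ^ 2) 0 ^ (1 / (p - 1))

/-! For `p > 1` the map `u ↦ u ^ p` is convex, for `p < 1` concave, and the Barenblatt profile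
`g` satisfies `g ^ (p - 1) = C - λ|x|²` wherever `g > 0` (everywhere when `p < 1`). Integrating
the tangent-line inequality of `u ↦ u ^ p` at `g x` against a density `f`, the linear term
`p (C - λ|x|²) (f - g)` integrates to zero when `f` has the mass and second moment of `g`, so
`∫ f ^ p ≥ ∫ g ^ p` for `p > 1` and `≤` for `p < 1`; in both cases `R_p(f) ≤ R_p(g)`.
Since `R_p - (n/2) log E` is invariant under the mass-preserving dilations `f ↦ t ^ n f(t •)`,
one may first dilate `f` to the second moment of `g`, and `B` is a dilation of `g`. -/

section Tangent

variable {p u v b : ℝ}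

theorem rpow_add_mul_sub_le_rpow (hp : 1 ≤ p) (hu : 0 ≤ u) (hv : 0 < v) :
    v ^ p + p * v ^ (p - 1) * (u - v) ≤ u ^ p := by
  have key := one_add_mul_self_le_rpow_one_add (s := u / v - 1)
    (by linarith [div_nonneg hu hv.le]) hp
  rw [add_sub_cancel, div_rpow hu hv.le, le_div_iff₀ (rpow_pos_of_pos hv p)] at key
  calc v ^ p + p * v ^ (p - 1) * (u - v) = (1 + p * (u / v - 1)) * v ^ p := by
        rw [rpow_sub_one hv.ne']; field_simp
    _ ≤ u ^ p := key

theorem rpow_le_rpow_add_mul_sub (hp0 : 0 ≤ p) (hp : p ≤ 1) (hu : 0 ≤ u) (hv : 0 < v) :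
    u ^ p ≤ v ^ p + p * v ^ (p - 1) * (u - v) := by
  have key := rpow_one_add_le_one_add_mul_self (s := u / v - 1)
    (by linarith [div_nonneg hu hv.le]) hp0 hp
  rw [add_sub_cancel, div_rpow hu hv.le, div_le_iff₀ (rpow_pos_of_pos hv p)] at key
  calc u ^ p ≤ (1 + p * (u / v - 1)) * v ^ p := key
    _ = v ^ p + p * v ^ (p - 1) * (u - v) := by
        rw [rpow_sub_one hv.ne']; field_simp

theorem max_rpow_one_div_sub_one_rpow (hp0 : p ≠ 0) (hp1 : p ≠ 1) (b : ℝ) :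
    (max b 0 ^ (1 / (p - 1))) ^ p = b * max b 0 ^ (1 / (p - 1)) := by
  have hp1' : p - 1 ≠ 0 := sub_ne_zero.2 hp1
  rcases le_or_gt b 0 with hb | hb
  · rw [max_eq_right hb, zero_rpow (one_div_ne_zero hp1'), zero_rpow hp0, mul_zero]
  · rw [max_eq_left hb.le, ← rpow_mul hb.le,
      show 1 / (p - 1) * p = 1 + 1 / (p - 1) by field_simp; ring, rpow_add hb, rpow_one]

theorem max_rpow_one_div_sub_one_rpow_sub_one (hp1 : p ≠ 1) (hb : 0 < b) :
    (max b 0 ^ (1 / (p - 1))) ^ (p - 1) = b := by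
  rw [← rpow_mul (le_max_right _ _), one_div_mul_cancel (sub_ne_zero.2 hp1), rpow_one,
    max_eq_left hb.le]

/-- With `v = b₊ ^ (1 / (p - 1))`, the left side is the tangent line of `u ↦ u ^ p` at `v`,
evaluated at `u`, whenever `b > 0`. -/
theorem tangent_le_rpow_of_one_lt (hp : 1 < p) (hu : 0 ≤ u) :
    p * (b * u) - (p - 1) * (b * max b 0 ^ (1 / (p - 1))) ≤ u ^ p := by
  rcases le_or_gt b 0 with hb | hb
  · rw [max_eq_right hb, zero_rpow (one_div_ne_zero (by linarith)), mul_zero, mul_zero, sub_zero]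
    nlinarith [mul_nonpos_of_nonpos_of_nonneg hb hu, rpow_nonneg hu p]
  · set v := max b 0 ^ (1 / (p - 1))
    have hv : 0 < v := rpow_pos_of_pos (lt_max_of_lt_left hb) _
    have hvp1 : v ^ (p - 1) = b := max_rpow_one_div_sub_one_rpow_sub_one (by linarith) hb
    calc p * (b * u) - (p - 1) * (b * v) = v ^ p + p * v ^ (p - 1) * (u - v) := by
          rw [max_rpow_one_div_sub_one_rpow (by linarith) hp.ne', hvp1]; ring
      _ ≤ u ^ p := rpow_add_mul_sub_le_rpow hp.le hu hv

theorem rpow_le_tangent_of_lt_one (hp0 : 0 < p) (hp : p < 1) (hu : 0 ≤ u)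
    (hb : 0 < b) : u ^ p ≤ p * (b * u) - (p - 1) * (b * max b 0 ^ (1 / (p - 1))) := by
  set v := max b 0 ^ (1 / (p - 1))
  have hv : 0 < v := rpow_pos_of_pos (lt_max_of_lt_left hb) _
  have hvp1 : v ^ (p - 1) = b := max_rpow_one_div_sub_one_rpow_sub_one (by linarith) hb
  calc u ^ p ≤ v ^ p + p * v ^ (p - 1) * (u - v) := rpow_le_rpow_add_mul_sub hp0.le hp.le hu hv
    _ = p * (b * u) - (p - 1) * (b * v) := by
        rw [max_rpow_one_div_sub_one_rpow hp0.ne' hp.ne, hvp1]; ring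

end Tangent

section PowerProfile

variable {α : Type*} {p C k : ℝ} {V f : α → ℝ}

noncomputable def powerProfile (p C k : ℝ) (V : α → ℝ) (x : α) : ℝ :=
  max (C - k * V x) 0 ^ (1 / (p - 1))

theorem powerProfile_nonneg (x : α) : 0 ≤ powerProfile p C k V x :=
  rpow_nonneg (le_max_right _ _) _

theorem powerProfile_rpow (hp0 : p ≠ 0) (hp1 : p ≠ 1) (x : α) :
    powerProfile p C k V x ^ p = (C - k * V x) * powerProfile p C k V x :=
  max_rpow_one_div_sub_one_rpow hp0 hp1 _

variable [MeasurableSpace α] {μ : Measure α}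

theorem integrable_const_sub_mul (hf : Integrable f μ) (hVf : Integrable (fun x => V x * f x) μ) :
    Integrable (fun x => (C - k * V x) * f x) μ :=
  ((hf.const_mul C).sub (hVf.const_mul k)).congr
    (.of_forall fun x => by simp only [Pi.sub_apply]; ring)

theorem integral_const_sub_mul (hf : Integrable f μ) (hVf : Integrable (fun x => V x * f x) μ) :
    ∫ x, (C - k * V x) * f x ∂μ = C * ∫ x, f x ∂μ - k * ∫ x, V x * f x ∂μ := by
  rw [← integral_const_mul, ← integral_const_mul, ← integral_sub (hf.const_mul C)
    (hVf.const_mul k)]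
  congr 1 with x
  ring

theorem integrable_powerProfile_rpow (hp0 : p ≠ 0) (hp1 : p ≠ 1)
    (hg : Integrable (powerProfile p C k V) μ)
    (hVg : Integrable (fun x => V x * powerProfile p C k V x) μ) :
    Integrable (fun x => powerProfile p C k V x ^ p) μ := by
  simp_rw [powerProfile_rpow hp0 hp1]
  exact integrable_const_sub_mul hg hVg

theorem integrable_tangent (hf : Integrable f μ) (hVf : Integrable (fun x => V x * f x) μ)
    (hg : Integrable (powerProfile p C k V) μ)
    (hVg : Integrable (fun x => V x * powerProfile p C k V x) μ) :
    Integrable (fun x =>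
      p * ((C - k * V x) * f x) - (p - 1) * ((C - k * V x) * powerProfile p C k V x)) μ :=
  ((integrable_const_sub_mul hf hVf).const_mul p).sub
    ((integrable_const_sub_mul hg hVg).const_mul (p - 1))

theorem integral_tangent_eq_integral_powerProfile_rpow (hp0 : p ≠ 0) (hp1 : p ≠ 1)
    (hf : Integrable f μ) (hVf : Integrable (fun x => V x * f x) μ)
    (hg : Integrable (powerProfile p C k V) μ)
    (hVg : Integrable (fun x => V x * powerProfile p C k V x) μ)
    (hmass : ∫ x, f x ∂μ = ∫ x, powerProfile p C k V x ∂μ)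
    (hmom : ∫ x, V x * f x ∂μ = ∫ x, V x * powerProfile p C k V x ∂μ) :
    ∫ x, (p * ((C - k * V x) * f x) - (p - 1) * ((C - k * V x) * powerProfile p C k V x)) ∂μ
      = ∫ x, powerProfile p C k V x ^ p ∂μ := by
  simp_rw [powerProfile_rpow hp0 hp1]
  rw [integral_sub ((integrable_const_sub_mul hf hVf).const_mul p)
      ((integrable_const_sub_mul hg hVg).const_mul (p - 1)), integral_const_mul,
    integral_const_mul, integral_const_sub_mul hf hVf, integral_const_sub_mul hg hVg, hmass, hmom]
  ring

theorem integral_powerProfile_rpow_le (hp : 1 < p) (hf0 : ∀ x, 0 ≤ f x) (hf : Integrable f μ)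
    (hVf : Integrable (fun x => V x * f x) μ) (hfp : Integrable (fun x => f x ^ p) μ)
    (hg : Integrable (powerProfile p C k V) μ)
    (hVg : Integrable (fun x => V x * powerProfile p C k V x) μ)
    (hmass : ∫ x, f x ∂μ = ∫ x, powerProfile p C k V x ∂μ)
    (hmom : ∫ x, V x * f x ∂μ = ∫ x, V x * powerProfile p C k V x ∂μ) :
    ∫ x, powerProfile p C k V x ^ p ∂μ ≤ ∫ x, f x ^ p ∂μ := by
  rw [← integral_tangent_eq_integral_powerProfile_rpow (by linarith) hp.ne' hf hVf hg hVg hmass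
    hmom]
  exact integral_mono (integrable_tangent hf hVf hg hVg) hfp fun x =>
    tangent_le_rpow_of_one_lt hp (hf0 x)

theorem integral_rpow_le_powerProfile (hp0 : 0 < p) (hp : p < 1) (hV : ∀ x, k * V x < C)
    (hf0 : ∀ x, 0 ≤ f x) (hf : Integrable f μ)
    (hVf : Integrable (fun x => V x * f x) μ) (hfp : Integrable (fun x => f x ^ p) μ)
    (hg : Integrable (powerProfile p C k V) μ)
    (hVg : Integrable (fun x => V x * powerProfile p C k V x) μ)
    (hmass : ∫ x, f x ∂μ = ∫ x, powerProfile p C k V x ∂μ)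
    (hmom : ∫ x, V x * f x ∂μ = ∫ x, V x * powerProfile p C k V x ∂μ) :
    ∫ x, f x ^ p ∂μ ≤ ∫ x, powerProfile p C k V x ^ p ∂μ := by
  rw [← integral_tangent_eq_integral_powerProfile_rpow hp0.ne' hp.ne hf hVf hg hVg hmass hmom]
  exact integral_mono hfp (integrable_tangent hf hVf hg hVg) fun x =>
    rpow_le_tangent_of_lt_one hp0 hp (hf0 x) (sub_pos.2 (hV x))

theorem integral_rpow_pos (hf0 : ∀ x, 0 ≤ f x) (hf : 0 < ∫ x, f x ∂μ)
    (hfp : Integrable (fun x => f x ^ p) μ) :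
    0 < ∫ x, f x ^ p ∂μ := by
  rw [integral_pos_iff_support_of_nonneg hf0 (.of_integral_ne_zero hf.ne')] at hf
  rw [integral_pos_iff_support_of_nonneg (fun x => rpow_nonneg (hf0 x) p) hfp]
  exact hf.trans_le (measure_mono fun x hx => (rpow_pos_of_pos ((hf0 x).lt_of_ne' hx) p).ne')

end PowerProfile

section Dilation

variable {n : ℕ} {p t : ℝ} {φ : EuclideanSpace ℝ (Fin n) → ℝ}

noncomputable def dilation (n : ℕ) (t : ℝ) (φ : EuclideanSpace ℝ (Fin n) → ℝ)
    (x : EuclideanSpace ℝ (Fin n)) : ℝ :=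
  t ^ n * φ (t • x)

theorem dilation_nonneg (ht : 0 < t) (hφ : ∀ x, 0 ≤ φ x) (x : EuclideanSpace ℝ (Fin n)) :
    0 ≤ dilation n t φ x :=
  mul_nonneg (pow_nonneg ht.le n) (hφ _)

theorem integrable_dilation_iff (ht : t ≠ 0) : Integrable (dilation n t φ) ↔ Integrable φ :=
  (integrable_const_mul_iff (pow_ne_zero n ht).isUnit _).trans
    (integrable_comp_smul_iff volume φ ht)

theorem integral_dilation (ht : 0 < t) : ∫ x, dilation n t φ x = ∫ x, φ x := by
  simp only [dilation]
  rw [integral_const_mul, Measure.integral_comp_smul_of_nonneg volume φ t (hR := ht.le),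
    finrank_euclideanSpace_fin, smul_eq_mul, mul_inv_cancel_left₀ (pow_ne_zero n ht.ne')]

theorem norm_sq_mul_dilation (ht : t ≠ 0) (x : EuclideanSpace ℝ (Fin n)) :
    ‖x‖ ^ 2 * dilation n t φ x
      = (t ^ 2)⁻¹ * dilation n t (fun y => ‖y‖ ^ 2 * φ y) x := by
  simp only [dilation, norm_smul, mul_pow, norm_eq_abs, sq_abs]
  field_simp

theorem integrable_moment_dilation_iff (ht : t ≠ 0) :
    Integrable (fun x => ‖x‖ ^ 2 * dilation n t φ x)
      ↔ Integrable (fun x => ‖x‖ ^ 2 * φ x) := by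
  simp_rw [norm_sq_mul_dilation ht]
  rw [integrable_const_mul_iff (inv_ne_zero (pow_ne_zero 2 ht)).isUnit, integrable_dilation_iff ht]

theorem secondMoment_dilation (ht : 0 < t) :
    secondMoment n (dilation n t φ) = secondMoment n φ / t ^ 2 := by
  simp_rw [secondMoment, norm_sq_mul_dilation ht.ne', integral_const_mul, integral_dilation ht,
    inv_mul_eq_div]

theorem dilation_rpow (ht : 0 < t) (hφ : ∀ x, 0 ≤ φ x) (x : EuclideanSpace ℝ (Fin n)) :
    dilation n t φ x ^ p = (t ^ n) ^ (p - 1) * dilation n t (fun y => φ y ^ p) x := by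
  have htn : 0 < t ^ n := pow_pos ht n
  simp only [dilation]
  rw [mul_rpow htn.le (hφ _), ← mul_assoc, rpow_sub_one htn.ne', div_mul_cancel₀ _ htn.ne']

theorem integrable_dilation_rpow (ht : 0 < t) (hφ : ∀ x, 0 ≤ φ x)
    (hφp : Integrable (fun x => φ x ^ p)) : Integrable (fun x => dilation n t φ x ^ p) := by
  simp_rw [dilation_rpow ht hφ]
  exact ((integrable_dilation_iff ht.ne').2 hφp).const_mul _

theorem integral_dilation_rpow (ht : 0 < t) (hφ : ∀ x, 0 ≤ φ x) :
    ∫ x, dilation n t φ x ^ p = (t ^ n) ^ (p - 1) * ∫ x, φ x ^ p := by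
  simp_rw [dilation_rpow ht hφ, integral_const_mul, integral_dilation ht]

theorem renyiEntropy_dilation (hp1 : p ≠ 1) (ht : 0 < t) (hφ : ∀ x, 0 ≤ φ x)
    (hφp : ∫ x, φ x ^ p ≠ 0) :
    renyiEntropy n p (dilation n t φ) = renyiEntropy n p φ - n * log t := by
  have h1p : 1 - p ≠ 0 := sub_ne_zero.2 hp1.symm
  rw [renyiEntropy, renyiEntropy, integral_dilation_rpow ht hφ,
    log_mul (rpow_pos_of_pos (pow_pos ht n) _).ne' hφp, log_rpow (pow_pos ht n), log_pow]
  field_simp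
  ring

theorem renyiEntropy_sub_log_secondMoment_dilation (hp1 : p ≠ 1) (ht : 0 < t)
    (hφ : ∀ x, 0 ≤ φ x) (hφp : ∫ x, φ x ^ p ≠ 0) (hE : secondMoment n φ ≠ 0) :
    renyiEntropy n p (dilation n t φ) - n / 2 * log (secondMoment n (dilation n t φ))
      = renyiEntropy n p φ - n / 2 * log (secondMoment n φ) := by
  rw [renyiEntropy_dilation hp1 ht hφ hφp, secondMoment_dilation ht,
    log_div hE (pow_pos ht 2).ne', log_pow]
  push_cast
  ring

end Dilation

section Barenblatt

variable {n : ℕ} {p C : ℝ} {f : EuclideanSpace ℝ (Fin n) → ℝ}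

theorem pos_of_div_add_two_lt (hp : (n : ℝ) / (n + 2) < p) : 0 < p :=
  (by positivity : (0 : ℝ) ≤ n / (n + 2)).trans_lt hp

theorem two_add_mul_sub_one_pos (hp : (n : ℝ) / (n + 2) < p) : 0 < 2 + (n : ℝ) * (p - 1) := by
  rw [div_lt_iff₀ (by positivity)] at hp
  rcases le_or_gt p 1 with h | h <;> nlinarith

theorem two_div_add_sub_one_pos (hn : n ≠ 0) (hp : (n : ℝ) / (n + 2) < p) :
    0 < 2 / (n : ℝ) + p - 1 := by
  have hn' : (0 : ℝ) < n := by positivity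
  rw [show 2 / (n : ℝ) + p - 1 = (2 + n * (p - 1)) / n by field_simp; ring]
  exact div_pos (two_add_mul_sub_one_pos hp) hn'

theorem barenblattProfile_eq_powerProfile :
    barenblattProfile n p C
      = powerProfile p C ((p - 1) / (2 * (2 + (n : ℝ) * (p - 1)) * p)) (fun x => ‖x‖ ^ 2) :=
  rfl

theorem renyiEntropy_le_renyiEntropy_barenblattProfile (hp : (n : ℝ) / (n + 2) < p)
    (hp1 : p ≠ 1) (hC : 0 < C) (hf0 : ∀ x, 0 ≤ f x) (hf : Integrable f)
    (hfm : Integrable (fun x => ‖x‖ ^ 2 * f x)) (hfp : Integrable (fun x => f x ^ p))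
    (hfp_pos : 0 < ∫ x, f x ^ p) (hg : Integrable (barenblattProfile n p C))
    (hgm : Integrable (fun x => ‖x‖ ^ 2 * barenblattProfile n p C x))
    (hgp_pos : 0 < ∫ x, barenblattProfile n p C x ^ p)
    (hmass : ∫ x, f x = ∫ x, barenblattProfile n p C x)
    (hmom : secondMoment n f = secondMoment n (barenblattProfile n p C)) :
    renyiEntropy n p f ≤ renyiEntropy n p (barenblattProfile n p C) := by
  have hp0 := pos_of_div_add_two_lt hp
  rw [barenblattProfile_eq_powerProfile] at hg hgm hgp_pos hmass hmom ⊢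
  unfold renyiEntropy
  rcases hp1.lt_or_gt with hlt | hgt
  · have hk : (p - 1) / (2 * (2 + (n : ℝ) * (p - 1)) * p) < 0 :=
      div_neg_of_neg_of_pos (by linarith)
        (mul_pos (mul_pos two_pos (two_add_mul_sub_one_pos hp)) hp0)
    have hV : ∀ x : EuclideanSpace ℝ (Fin n), _ * ‖x‖ ^ 2 < C := fun x =>
      (mul_nonpos_of_nonpos_of_nonneg hk.le (by positivity)).trans_lt hC
    exact mul_le_mul_of_nonneg_left (log_le_log hfp_pos (integral_rpow_le_powerProfile hp0 hlt
      hV hf0 hf hfm hfp hg hgm hmass hmom)) (one_div_nonneg.2 (by linarith))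
  · exact mul_le_mul_of_nonpos_left (log_le_log hgp_pos (integral_powerProfile_rpow_le hgt hf0 hf
      hfm hfp hg hgm hmass hmom)) (one_div_nonpos.2 (by linarith))

theorem renyiEntropy_sub_log_secondMoment_le_barenblattProfile (hp : (n : ℝ) / (n + 2) < p)
    (hp1 : p ≠ 1) (hC : 0 < C) (hf0 : ∀ x, 0 ≤ f x) (hf : Integrable f)
    (hfm : Integrable (fun x => ‖x‖ ^ 2 * f x)) (hfm_pos : 0 < secondMoment n f)
    (hfp : Integrable (fun x => f x ^ p)) (hfp_pos : 0 < ∫ x, f x ^ p)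
    (hg : Integrable (barenblattProfile n p C))
    (hgm : Integrable (fun x => ‖x‖ ^ 2 * barenblattProfile n p C x))
    (hgm_pos : 0 < secondMoment n (barenblattProfile n p C))
    (hgp_pos : 0 < ∫ x, barenblattProfile n p C x ^ p)
    (hmass : ∫ x, f x = ∫ x, barenblattProfile n p C x) :
    renyiEntropy n p f - n / 2 * log (secondMoment n f)
      ≤ renyiEntropy n p (barenblattProfile n p C)
        - n / 2 * log (secondMoment n (barenblattProfile n p C)) := by
  set s := √(secondMoment n f / secondMoment n (barenblattProfile n p C))
  have hs : 0 < s := sqrt_pos.2 (div_pos hfm_pos hgm_pos)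
  have hmom : secondMoment n (dilation n s f) = secondMoment n (barenblattProfile n p C) := by
    rw [secondMoment_dilation hs, sq_sqrt (div_pos hfm_pos hgm_pos).le,
      div_div_cancel₀ hfm_pos.ne']
  rw [← renyiEntropy_sub_log_secondMoment_dilation hp1 hs hf0 hfp_pos.ne' hfm_pos.ne', hmom]
  gcongr
  exact renyiEntropy_le_renyiEntropy_barenblattProfile hp hp1 hC (dilation_nonneg hs hf0)
    ((integrable_dilation_iff hs.ne').2 hf) ((integrable_moment_dilation_iff hs.ne').2 hfm)
    (integrable_dilation_rpow hs hf0 hfp)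
    (by rw [integral_dilation_rpow hs hf0]; exact mul_pos (by positivity) hfp_pos)
    hg hgm hgp_pos (by rw [integral_dilation hs, hmass]) hmom

end Barenblatt

theorem renyiPower_div_rpow_eq_exp {n : ℕ} (hn : n ≠ 0) (p : ℝ) {E : ℝ} (hE : 0 < E)
    (f : EuclideanSpace ℝ (Fin n) → ℝ) :
    renyiPower n p f / E ^ (1 + (n : ℝ) * (p - 1) / 2)
      = exp ((2 / n + p - 1) * (renyiEntropy n p f - n / 2 * log E)) := by
  rw [renyiPower, rpow_def_of_pos hE, ← exp_sub]
  congr 1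
  field_simp
  ring

/-- Under a variance constraint the Rényi entropy (power) of order `p`
is maximized by a Barenblatt density: for every probability density `f` with finite
positive second moment and `0 < ∫ f^p < ∞`, and `B_{p,σ}` the Barenblatt density with
second moment `σ`, one has `R_p(f) - (n/2) log E(f) ≤ R_p(B_{p,σ}) - (n/2) log E(B_{p,σ})`
and equivalently `N_p(f)/E(f)^{1+n(p-1)/2} ≤ N_p(B_{p,σ})/E(B_{p,σ})^{1+n(p-1)/2}`. -/
theorem renyi_entropy_max_barenblatt
    (n : ℕ) (hn : 1 ≤ n) (p : ℝ) (hp : (n : ℝ) / (n + 2) < p) (hp1 : p ≠ 1)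
    (f : EuclideanSpace ℝ (Fin n) → ℝ)
    (hf_nonneg : ∀ x, 0 ≤ f x)
    (hf_int : Integrable f)
    (hf_mass : ∫ x, f x = 1)
    (hf_mom : Integrable (fun x => ‖x‖ ^ 2 * f x))
    (hf_mom_pos : 0 < secondMoment n f)
    (hfp_int : Integrable (fun x => f x ^ p))
    (hfp_pos : 0 < ∫ x, f x ^ p)
    -- the Barenblatt density `B_{p,σ}` of second moment `σ`, obtained by dilating the
    -- unit-mass Barenblatt profile:
    (C : ℝ) (hC : 0 < C)
    (hmass : ∫ x, barenblattProfile n p C x = 1)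
    (σ a : ℝ) (hσ : 0 < σ) (ha : 0 < a)
    (B : EuclideanSpace ℝ (Fin n) → ℝ)
    (hB : B = fun x => a ^ n * barenblattProfile n p C (a • x))
    (hBσ : secondMoment n B = σ) :
    renyiEntropy n p f - (n : ℝ) / 2 * Real.log (secondMoment n f)
        ≤ renyiEntropy n p B - (n : ℝ) / 2 * Real.log (secondMoment n B)
      ∧ renyiPower n p f / secondMoment n f ^ (1 + (n : ℝ) * (p - 1) / 2)
          ≤ renyiPower n p B / secondMoment n B ^ (1 + (n : ℝ) * (p - 1) / 2) := by
  set g := barenblattProfile n p C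
  replace hB : B = dilation n a g := hB
  have hg0 : ∀ x, 0 ≤ g x := powerProfile_nonneg
  have hg : Integrable g := .of_integral_ne_zero (by rw [hmass]; exact one_ne_zero)
  have hgm : Integrable (fun x => ‖x‖ ^ 2 * g x) := by
    rw [← integrable_moment_dilation_iff ha.ne', ← hB]
    exact .of_integral_ne_zero (hBσ.trans_ne hσ.ne')
  have hEg : 0 < secondMoment n g := by
    rw [← div_mul_cancel₀ (secondMoment n g) (pow_pos ha 2).ne', ← secondMoment_dilation ha,
      ← hB, hBσ]
    positivity
  have hgp_pos : 0 < ∫ x, g x ^ p := integral_rpow_pos hg0 (by rw [hmass]; exact one_pos)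
    (integrable_powerProfile_rpow (pos_of_div_add_two_lt hp).ne' hp1 hg hgm)
  have hJ : renyiEntropy n p f - n / 2 * log (secondMoment n f)
      ≤ renyiEntropy n p B - n / 2 * log (secondMoment n B) := by
    rw [hB, renyiEntropy_sub_log_secondMoment_dilation hp1 ha hg0 hgp_pos.ne' hEg.ne']
    exact renyiEntropy_sub_log_secondMoment_le_barenblattProfile hp hp1 hC hf_nonneg hf_int hf_mom
      hf_mom_pos hfp_int hfp_pos hg hgm hEg hgp_pos (hf_mass.trans hmass.symm)
  have hn0 : n ≠ 0 := by omega
  refine ⟨hJ, ?_⟩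
  rw [renyiPower_div_rpow_eq_exp hn0 p hf_mom_pos, renyiPower_div_rpow_eq_exp hn0 p (hBσ ▸ hσ),
    exp_le_exp]
  exact mul_le_mul_of_nonneg_left hJ (two_div_add_sub_one_pos hn0 hp).le
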